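/- Define M_{n,1}(p,y) for 0 ≤ y < p by M_{1,1}(p,y) = p/2 and M_{n,1}(p,y) = ∫_y^p M_{1,1}(a,y) M_{n-1,1}(p,a) da for n ≥ 2. Then for every n ≥ 1, M_{n,1}(p,y) = (2p/(4ⁿ (n-1)!)) (p² - y²)^{n-1}. -/

import Mathlib

open Real MeasureTheory intervalIntegral Set Filter Topology

/-- The limiting (`α = 1`) kernels: `M_{1,1}(p,y) = p/2` and
`M_{n,1}(p,y) = ∫_y^p M_{1,1}(a,y) M_{n-1,1}(p,a) da` for `n ≥ 2`
(`MkerOne 0 := 0` is unused). -/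
noncomputable def MkerOne : ℕ → ℝ → ℝ → ℝ
  | 0 => fun _ _ => 0
  | 1 => fun p _ => p / 2
  | (n+2) => fun p y => ∫ a in y..p, (a / 2) * MkerOne (n+1) p a

lemma integral_mul_sq_sub_sq_pow (n : ℕ) (y p : ℝ) :
    ∫ a in y..p, a * (p ^ 2 - a ^ 2) ^ n = (p ^ 2 - y ^ 2) ^ (n + 1) / (2 * (n + 1)) := by
  have hderiv : ∀ a ∈ uIcc y p,
      HasDerivAt (fun a : ℝ => -(p ^ 2 - a ^ 2) ^ (n + 1) / (2 * (n + 1)))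
        (a * (p ^ 2 - a ^ 2) ^ n) a := by
    intro a _
    have hinner : HasDerivAt (fun a : ℝ => p ^ 2 - a ^ 2) (-(2 * a ^ 1)) a :=
      (hasDerivAt_pow 2 a).const_sub _
    refine ((hinner.fun_pow (n + 1)).fun_neg.div_const _).congr_deriv ?_
    push_cast
    field_simp
  have hint : IntervalIntegrable (fun a : ℝ => a * (p ^ 2 - a ^ 2) ^ n) volume y p :=
    (by fun_prop : Continuous _).intervalIntegrable y p
  rw [integral_eq_sub_of_hasDerivAt hderiv hint, sub_self, zero_pow n.succ_ne_zero]
  ring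

theorem MkerOne_succ_eq (n : ℕ) (p y : ℝ) :
    MkerOne (n + 1) p y = 2 * p / (4 ^ (n + 1) * n.factorial) * (p ^ 2 - y ^ 2) ^ n := by
  induction n generalizing y with
  | zero => simp only [MkerOne]; ring
  | succ n ih =>
    set c : ℝ := 2 * p / (4 ^ (n + 1) * n.factorial)
    calc MkerOne (n + 2) p y
        = ∫ a in y..p, a / 2 * (c * (p ^ 2 - a ^ 2) ^ n) := by
          simp only [MkerOne, ih]
      _ = c / 2 * ∫ a in y..p, a * (p ^ 2 - a ^ 2) ^ n := by
          rw [← intervalIntegral.integral_const_mul]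
          congr 1 with a
          ring
      _ = c / 2 * ((p ^ 2 - y ^ 2) ^ (n + 1) / (2 * (n + 1))) := by
          rw [integral_mul_sq_sub_sq_pow]
      _ = _ := by
          simp only [c, Nat.factorial_succ, Nat.cast_mul, Nat.cast_succ]
          field_simp
          ring

/-- For every `n ≥ 1` and `0 ≤ y < p`,
`M_{n,1}(p,y) = (2p/(4ⁿ (n-1)!)) (p² - y²)^{n-1}`. -/
theorem stmt11 :
    ∀ n : ℕ, 1 ≤ n → ∀ p y : ℝ, 0 ≤ y → y < p →
      MkerOne n p y =
        2 * p / (4 ^ n * (Nat.factorial (n - 1))) * (p ^ 2 - y ^ 2) ^ (n - 1) := by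
  intro n hn p y _ _
  obtain ⟨m, rfl⟩ := Nat.exists_eq_add_of_le' hn
  exact MkerOne_succ_eq m p y
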